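/- Let v, x ∈ ℂ be such that θ̄′(0) ≠ 0, θ̄(x) ≠ 0 and, for every (k,l) ∈ {1,…,n}², both θ̄(v + (d/n)(kτ + l)) ≠ 0 and θ̄(v + (d/n)(kτ + l) + x) ≠ 0. Then the linear map Mat_n(ℂ) → Mat_n(ℂ) given by W ↦ ∑_{(k,l) ∈ {1,…,n}²} exp(2πi d k x / n) · σ(v + (d/n)(kτ + l), x) · tr(Z^∨_{(k,l)} W) · Z_{(k,l)} is a ℂ-linear isomorphism; that is, the tensor r(v; x₁, x₂) with x = x₂ − x₁ is non-degenerate. -/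

import Mathlib

open Complex Matrix
open scoped Kronecker

noncomputable section

/-- `ε = exp(2πi d/n)`. -/
def eps (n d : ℕ) : ℂ := Complex.exp (2 * Real.pi * Complex.I * d / n)

/-- The diagonal matrix `X = diag(1, ε, ε², …, ε^{n−1})`. -/
def Xmat (n d : ℕ) : Matrix (Fin n) (Fin n) ℂ :=
  Matrix.diagonal fun i => eps n d ^ (i : ℕ)

/-- The cyclic shift matrix `Y` with `Y_{i,j} = 1` iff `j ≡ i+1 (mod n)`. -/
def Ymat (n : ℕ) : Matrix (Fin n) (Fin n) ℂ :=
  Matrix.of fun i j => if (j : ℕ) = ((i : ℕ) + 1) % n then 1 else 0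

/-- `Z_{(k,l)} = Y^k X^{−l}`. -/
def Zmat (n d : ℕ) (k l : ℕ) : Matrix (Fin n) (Fin n) ℂ :=
  Ymat n ^ k * (Xmat n d)⁻¹ ^ l

/-- `Z^∨_{(k,l)} = (1/n) X^l Y^{−k}`. -/
def Zdual (n d : ℕ) (k l : ℕ) : Matrix (Fin n) (Fin n) ℂ :=
  (n : ℂ)⁻¹ • (Xmat n d ^ l * (Ymat n)⁻¹ ^ k)

/-- The third Jacobi theta function `θ(z) = ∑_{m ∈ ℤ} exp(πiτm² + 2πimz)`. -/
def theta3 (τ z : ℂ) : ℂ :=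
  ∑' m : ℤ, Complex.exp (Real.pi * Complex.I * τ * (m : ℂ) ^ 2 +
    2 * Real.pi * Complex.I * (m : ℂ) * z)

/-- The first Jacobi theta function
`θ̄(z) = 2 exp(πiτ/4) ∑_{m ≥ 0} (−1)^m exp(πiτ m(m+1)) sin((2m+1)πz)`. -/
def theta1 (τ z : ℂ) : ℂ :=
  2 * Complex.exp (Real.pi * Complex.I * τ / 4) *
    ∑' m : ℕ, (-1 : ℂ) ^ m * Complex.exp (Real.pi * Complex.I * τ * (m : ℂ) * ((m : ℂ) + 1)) *
      Complex.sin ((2 * (m : ℂ) + 1) * Real.pi * z)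

/-- The Kronecker elliptic function `σ(u, z) = θ̄′(0) θ̄(u+z) / (θ̄(u) θ̄(z))`. -/
def sigmaK (τ u z : ℂ) : ℂ :=
  deriv (theta1 τ) 0 * theta1 τ (u + z) / (theta1 τ u * theta1 τ z)

/-!
The matrices `Z_{(k,l)}` and `Z^∨_{(k,l)}` are dual bases of `Mat_n(ℂ)` for the trace pairing:
by cyclicity `tr(Z^∨_{(k,l)} Z_{(k',l')})` is `1/n` times the trace of a diagonal matrix times the
shift `Y^{k'-k}`, which vanishes unless `k ≡ k'`, and is then a character sum
`(1/n) ∑ᵢ ε^{i(l-l')}` over the primitive root `ε`, which vanishes unless `l ≡ l'`. In the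
basis `Z` the map is therefore diagonal, with eigenvalues
`exp(2πi dkx/n) σ(v + (d/n)(kτ + l), x)`, and these are nonzero by the hypotheses on `θ̄`.
-/

open Fin.NatCast

theorem IsPrimitiveRoot.pow_eq_pow_iff_natCast_eq {M : Type*} [CommMonoid M] {ζ : M} {n : ℕ}
    [NeZero n] (hζ : IsPrimitiveRoot ζ n) (a b : ℕ) : ζ ^ a = ζ ^ b ↔ (a : Fin n) = b := by
  rw [← pow_mod_orderOf ζ a, ← pow_mod_orderOf ζ b, ← hζ.eq_orderOf, Fin.ext_iff,
    Fin.val_natCast, Fin.val_natCast]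
  exact ⟨hζ.pow_inj (Nat.mod_lt _ n.pos_of_neZero) (Nat.mod_lt _ n.pos_of_neZero),
    fun h => h ▸ rfl⟩

theorem IsPrimitiveRoot.sum_inv_pow_mul_pow {K : Type*} [Field K] {ζ : K} {n : ℕ} [NeZero n]
    (hζ : IsPrimitiveRoot ζ n) (a b : ℕ) :
    ∑ i : Fin n, (ζ ^ (i : ℕ))⁻¹ ^ b * (ζ ^ (i : ℕ)) ^ a
      = if (a : Fin n) = b then (n : K) else 0 := by
  set ω := (ζ ^ b)⁻¹ * ζ ^ a
  have hω : ∀ i : ℕ, (ζ ^ i)⁻¹ ^ b * (ζ ^ i) ^ a = ω ^ i := fun i => by ring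
  have hωn : ω ^ n = 1 := by rw [← hω, hζ.pow_eq_one, inv_one, one_pow, one_pow, mul_one]
  have hω1 : ω = 1 ↔ (a : Fin n) = b := by
    rw [inv_mul_eq_one₀ (pow_ne_zero _ (hζ.ne_zero (NeZero.ne n))), eq_comm,
      hζ.pow_eq_pow_iff_natCast_eq]
  rw [Finset.sum_congr rfl fun (i : Fin n) _ => hω i, Fin.sum_univ_eq_sum_range (ω ^ ·)]
  by_cases h : ω = 1
  · simp [h, hω1.mp h]
  · rw [if_neg (mt hω1.mpr h), geom_sum_eq h, hωn, sub_self, zero_div]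

section DualPairing
variable {K M ι : Type*} [Field K] [AddCommGroup M] [Module K M] [Fintype ι] [DecidableEq ι]
  {Z : ι → M} {φ : ι → Module.Dual K M}

theorem linearIndependent_of_dual_pairing (hφ : ∀ p q, φ p (Z q) = if p = q then 1 else 0) :
    LinearIndependent K Z := by
  refine Fintype.linearIndependent_iff.mpr fun g hg p => ?_
  simpa [hφ] using congrArg (φ p) hg

theorem exists_linearEquiv_eq_sum_smul [FiniteDimensional K M]
    (hφ : ∀ p q, φ p (Z q) = if p = q then 1 else 0)
    (hcard : Fintype.card ι = Module.finrank K M)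
    (c : ι → K) (hc : ∀ p, c p ≠ 0) :
    ∃ e : M ≃ₗ[K] M, ∀ W, e W = ∑ p, (c p * φ p W) • Z p := by
  set b := basisOfLinearIndependentOfCardEqFinrank' Z (linearIndependent_of_dual_pairing hφ) hcard
  have hb : ⇑b = Z := coe_basisOfLinearIndependentOfCardEqFinrank' ..
  have hcoord : ∀ p, b.coord p = φ p := fun p =>
    b.ext fun q => by
      rw [Module.Basis.coord_apply, Module.Basis.repr_self, Finsupp.single_apply, hb, hφ]
      simp only [eq_comm]
  refine ⟨b.equivFun ≪≫ₗ LinearEquiv.piCongrRight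
    (fun p => LinearEquiv.smulOfNeZero K K (c p) (hc p)) ≪≫ₗ b.equivFun.symm, fun W => ?_⟩
  simp [Module.Basis.equivFun_symm_apply, ← hcoord, hb]

end DualPairing

section ShiftMatrix
variable {n : ℕ} [NeZero n] (R : Type*) [Semiring R]

def shiftMat (c : Fin n) : Matrix (Fin n) (Fin n) R :=
  Matrix.of fun i j => if j = i + c then 1 else 0

variable {R}

theorem shiftMat_mul (a b : Fin n) : shiftMat R a * shiftMat R b = shiftMat R (a + b) := by
  ext i j
  simp only [shiftMat, Matrix.mul_apply, Matrix.of_apply, ite_mul, one_mul, zero_mul,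
    Finset.sum_ite_eq', Finset.mem_univ, if_true, add_assoc]

theorem shiftMat_zero : shiftMat R (0 : Fin n) = 1 := by
  ext i j
  simp [shiftMat, Matrix.one_apply, eq_comm]

theorem shiftMat_pow (c : Fin n) (k : ℕ) : shiftMat R c ^ k = shiftMat R (k • c) := by
  induction k with
  | zero => simp [shiftMat_zero]
  | succ k ih => rw [pow_succ, ih, shiftMat_mul, succ_nsmul]

theorem trace_diagonal_mul_shiftMat (D : Fin n → R) (c : Fin n) :
    trace (diagonal D * shiftMat R c) = if c = 0 then ∑ i, D i else 0 := by
  split_ifs with hc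
  · simp [hc, shiftMat_zero]
  · simp [Matrix.trace, shiftMat, hc]

end ShiftMatrix

theorem Xmat_inv (n d : ℕ) :
    (Xmat n d)⁻¹ = diagonal fun i : Fin n => (eps n d ^ (i : ℕ))⁻¹ := by
  refine Matrix.inv_eq_right_inv ?_
  rw [Xmat, diagonal_mul_diagonal, ← diagonal_one]
  exact congrArg diagonal
    (funext fun i => mul_inv_cancel₀ (pow_ne_zero _ (Complex.exp_ne_zero _)))

section ClockAndShift
variable (n d : ℕ) [NeZero n]

theorem Ymat_eq_shiftMat : Ymat n = shiftMat ℂ 1 := by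
  ext i j
  have : ((i + 1 : Fin n) : ℕ) = ((i : ℕ) + 1) % n := by simp [Fin.val_add]
  simp only [Ymat, shiftMat, Matrix.of_apply, ← this, Fin.val_eq_val]

theorem Ymat_pow (k : ℕ) : Ymat n ^ k = shiftMat ℂ (k : Fin n) := by
  rw [Ymat_eq_shiftMat, shiftMat_pow, nsmul_one]

theorem Ymat_inv_pow (k : ℕ) : (Ymat n)⁻¹ ^ k = shiftMat ℂ (-k : Fin n) := by
  rw [Matrix.inv_eq_right_inv (B := shiftMat ℂ (-1)), shiftMat_pow, smul_neg, nsmul_one]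
  rw [Ymat_eq_shiftMat, shiftMat_mul, add_neg_cancel, shiftMat_zero]

theorem isPrimitiveRoot_eps (hcop : Nat.gcd d n = 1) : IsPrimitiveRoot (eps n d) n := by
  convert Complex.isPrimitiveRoot_exp_of_coprime d n (NeZero.ne n) hcop using 2
  rw [eps, mul_div_assoc]

theorem trace_Zdual_mul_Zmat (hcop : Nat.gcd d n = 1) (k l k' l' : ℕ) :
    trace (Zdual n d k l * Zmat n d k' l')
      = if (k : Fin n) = k' ∧ (l : Fin n) = l' then 1 else 0 := by
  have hn : (n : ℂ) ≠ 0 := NeZero.ne _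
  calc trace (Zdual n d k l * Zmat n d k' l')
      = (n : ℂ)⁻¹ *
          trace ((Xmat n d)⁻¹ ^ l' * Xmat n d ^ l * ((Ymat n)⁻¹ ^ k * Ymat n ^ k')) := by
        rw [Zdual, Zmat, smul_mul_assoc, trace_smul, smul_eq_mul, ← mul_assoc,
          mul_assoc _ _ (Ymat n ^ k'), trace_mul_cycle, ← mul_assoc]
    _ = (n : ℂ)⁻¹ *
          trace (diagonal (fun i : Fin n => (eps n d ^ i.1)⁻¹ ^ l' * (eps n d ^ i.1) ^ l)
            * shiftMat ℂ (-k + k' : Fin n)) := by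
        rw [Xmat_inv, Xmat, diagonal_pow, diagonal_pow, diagonal_mul_diagonal, Ymat_inv_pow,
          Ymat_pow, shiftMat_mul]
        rfl
    _ = _ := by
        rw [trace_diagonal_mul_shiftMat, (isPrimitiveRoot_eps n d hcop).sum_inv_pow_mul_pow]
        simp only [neg_add_eq_zero]
        split_ifs <;> simp_all

end ClockAndShift

theorem sigmaK_ne_zero {τ u z : ℂ} (h0 : deriv (theta1 τ) 0 ≠ 0) (hu : theta1 τ u ≠ 0)
    (hz : theta1 τ z ≠ 0) (huz : theta1 τ (u + z) ≠ 0) : sigmaK τ u z ≠ 0 :=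
  div_ne_zero (mul_ne_zero h0 huz) (mul_ne_zero hu hz)

theorem stmt16_general (n d : ℕ) (hdn : d < n) (hcop : Nat.gcd d n = 1)
    (τ : ℂ) (v x : ℂ)
    (h0 : deriv (theta1 τ) 0 ≠ 0) (hx : theta1 τ x ≠ 0)
    (hpol : ∀ k l : ℕ, 1 ≤ k → k ≤ n → 1 ≤ l → l ≤ n →
      theta1 τ (v + ((d : ℂ) / n) * (k * τ + l)) ≠ 0 ∧
      theta1 τ (v + ((d : ℂ) / n) * (k * τ + l) + x) ≠ 0) :
    ∃ e : Matrix (Fin n) (Fin n) ℂ ≃ₗ[ℂ] Matrix (Fin n) (Fin n) ℂ,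
      ∀ W : Matrix (Fin n) (Fin n) ℂ,
        e W = ∑ p : Fin n × Fin n,
          (Complex.exp (2 * Real.pi * Complex.I * d * ((p.1.1 : ℂ) + 1) * x / n) *
            sigmaK τ (v + ((d : ℂ) / n) * (((p.1.1 : ℂ) + 1) * τ + ((p.2.1 : ℂ) + 1))) x *
            Matrix.trace (Zdual n d (p.1.1 + 1) (p.2.1 + 1) * W)) •
            Zmat n d (p.1.1 + 1) (p.2.1 + 1) := by
  have : NeZero n := ⟨by omega⟩
  have hdual : ∀ p q : Fin n × Fin n,
      (traceLinearMap (Fin n) ℂ ℂ ∘ₗ LinearMap.mulLeft ℂ (Zdual n d (p.1.1 + 1) (p.2.1 + 1)))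
        (Zmat n d (q.1.1 + 1) (q.2.1 + 1)) = if p = q then 1 else 0 := fun p q => by
    simp [trace_Zdual_mul_Zmat n d hcop, Prod.ext_iff]
  have hcoeff : ∀ p : Fin n × Fin n,
      Complex.exp (2 * Real.pi * Complex.I * d * ((p.1.1 : ℂ) + 1) * x / n) *
        sigmaK τ (v + ((d : ℂ) / n) * (((p.1.1 : ℂ) + 1) * τ + ((p.2.1 : ℂ) + 1))) x ≠ 0 := by
    intro p
    obtain ⟨hu, hux⟩ := hpol (p.1.1 + 1) (p.2.1 + 1) (by omega) p.1.isLt (by omega) p.2.isLt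
    push_cast at hu hux
    exact mul_ne_zero (Complex.exp_ne_zero _) (sigmaK_ne_zero h0 hu hx hux)
  exact exists_linearEquiv_eq_sum_smul hdual (by simp [Module.finrank_matrix]) _ hcoeff

/-- Non-degeneracy of the elliptic solution of AYBE: the associated linear map
`W ↦ ∑ c_{(k,l)}(v;x) tr(Z^∨_{(k,l)} W) Z_{(k,l)}` is a `ℂ`-linear automorphism. -/
theorem stmt16 (n d : ℕ) (hd : 0 < d) (hdn : d < n) (hcop : Nat.gcd d n = 1)
    (τ : ℂ) (hτ : 0 < τ.im) (v x : ℂ)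
    (h0 : deriv (theta1 τ) 0 ≠ 0) (hx : theta1 τ x ≠ 0)
    (hpol : ∀ k l : ℕ, 1 ≤ k → k ≤ n → 1 ≤ l → l ≤ n →
      theta1 τ (v + ((d : ℂ) / n) * (k * τ + l)) ≠ 0 ∧
      theta1 τ (v + ((d : ℂ) / n) * (k * τ + l) + x) ≠ 0) :
    ∃ e : Matrix (Fin n) (Fin n) ℂ ≃ₗ[ℂ] Matrix (Fin n) (Fin n) ℂ,
      ∀ W : Matrix (Fin n) (Fin n) ℂ,
        e W = ∑ p : Fin n × Fin n,
          (Complex.exp (2 * Real.pi * Complex.I * d * ((p.1.1 : ℂ) + 1) * x / n) *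
            sigmaK τ (v + ((d : ℂ) / n) * (((p.1.1 : ℂ) + 1) * τ + ((p.2.1 : ℂ) + 1))) x *
            Matrix.trace (Zdual n d (p.1.1 + 1) (p.2.1 + 1) * W)) •
            Zmat n d (p.1.1 + 1) (p.2.1 + 1) :=
  stmt16_general n d hdn hcop τ v x h0 hx hpol
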